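/- Let T > 0, let W : [0,T] → ℝ be continuous, and let O : [0,T] → ℝ be differentiable with O(t) < W(t) and O′(t) = 2/(O(t) − W(t)) for all t ∈ [0,T]. Then for every ε > 0, the Lebesgue measure of the set {t ∈ [0,T] : W(t) − O(t) < 2ε} is at most ε·(O(0) − O(T)). -/
import Mathlib


/-- Let `W : [0,T] → ℝ` be continuous and let `O` be
differentiable on `[0,T]` with `O(t) < W(t)` and `O′(t) = 2/(O(t) − W(t))` for
all `t ∈ [0,T]` (the Loewner evolution of a boundary point to the left of the
driving function).  Then for every `ε > 0` the Lebesgue measure of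
`{t ∈ [0,T] : W(t) − O(t) < 2ε}` is at most `ε · (O(0) − O(T))`. -/
theorem loewner_time_near_driving_function_small
    (T : ℝ) (hT : 0 < T) (W O : ℝ → ℝ)
    (hW : ContinuousOn W (Set.Icc 0 T))
    (hO : ∀ t ∈ Set.Icc (0 : ℝ) T,
      HasDerivWithinAt O (2 / (O t - W t)) (Set.Icc (0 : ℝ) T) t)
    (hOW : ∀ t ∈ Set.Icc (0 : ℝ) T, O t < W t)
    (ε : ℝ) (hε : 0 < ε) :
    MeasureTheory.volume {t ∈ Set.Icc (0 : ℝ) T | W t - O t < 2 * ε} ≤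
      ENNReal.ofReal (ε * (O 0 - O T)) := by
  classical
  set g : ℝ → ℝ := fun t => 2 / (W t - O t) with hg_def
  have hIcc : MeasurableSet (Set.Icc (0:ℝ) T) := measurableSet_Icc
  set ν := MeasureTheory.volume.restrict (Set.Icc (0:ℝ) T) with hν
  have hOcont : ContinuousOn O (Set.Icc 0 T) := fun t ht => (hO t ht).continuousWithinAt
  have hsub : ∀ t ∈ Set.Icc (0:ℝ) T, 0 < W t - O t := fun t ht => sub_pos.2 (hOW t ht)
  have hgcont : ContinuousOn g (Set.Icc 0 T) :=
    continuousOn_const.div (hW.sub hOcont) (fun t ht => (hsub t ht).ne')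
  -- FTC: ∫ t in 0..T, -(g t) = O T - O 0
  have hneg : ∀ t ∈ Set.Icc (0:ℝ) T, 2 / (O t - W t) = -(g t) := by
    intro t ht
    rw [hg_def]
    rw [← neg_sub (W t) (O t), div_neg]
  have hint : IntervalIntegrable (fun t => -(g t)) MeasureTheory.volume 0 T := by
    apply ContinuousOn.intervalIntegrable
    rw [Set.uIcc_of_le hT.le]
    exact hgcont.neg
  have hFTC : ∫ t in (0:ℝ)..T, -(g t) = O T - O 0 := by
    apply intervalIntegral.integral_eq_sub_of_hasDeriv_right_of_le hT.le hOcont _ hint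
    intro t ht
    have h1 : HasDerivAt O (2 / (O t - W t)) t :=
      (hO t (Set.Ioo_subset_Icc_self ht)).hasDerivAt
        (Icc_mem_nhds ht.1 ht.2)
    rw [hneg t (Set.Ioo_subset_Icc_self ht)] at h1
    exact h1.hasDerivWithinAt
  have hgint : MeasureTheory.IntegrableOn g (Set.Icc 0 T) := by
    exact hgcont.integrableOn_compact isCompact_Icc
  have hνint : ∫ t, g t ∂ν = O 0 - O T := by
    have h1 : ∫ t, g t ∂ν = ∫ t in Set.Ioc (0:ℝ) T, g t := by
      rw [hν, MeasureTheory.integral_Icc_eq_integral_Ioc]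
    have h2 : ∫ t in Set.Ioc (0:ℝ) T, g t = ∫ t in (0:ℝ)..T, g t :=
      (intervalIntegral.integral_of_le hT.le).symm
    have h3 : ∫ t in (0:ℝ)..T, -(g t) = -∫ t in (0:ℝ)..T, g t := intervalIntegral.integral_neg
    rw [h1, h2]
    rw [h3] at hFTC
    linarith
  -- the set and its bound
  set S := {t ∈ Set.Icc (0 : ℝ) T | W t - O t < 2 * ε} with hS_def
  have hSsub : S ⊆ Set.Icc 0 T := fun t ht => ht.1
  have hvolS : MeasureTheory.volume S = ν S := by
    rw [hν, MeasureTheory.Measure.restrict_apply' hIcc,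
      Set.inter_eq_self_of_subset_left hSsub]
  set f : ℝ → ENNReal := fun t => ENNReal.ofReal (ε * g t) with hf_def
  have hfmeas : AEMeasurable f ν := by
    have : AEMeasurable g ν := hgcont.aemeasurable hIcc
    exact ENNReal.measurable_ofReal.comp_aemeasurable (this.const_mul ε)
  have hSsub2 : S ⊆ {t | 1 ≤ f t} := by
    intro t ht
    have htI := ht.1
    have hd : 0 < W t - O t := hsub t htI
    have hlt : W t - O t < 2 * ε := ht.2
    have h1 : (1:ℝ) ≤ ε * g t := by
      rw [hg_def]
      rw [mul_div_assoc']
      rw [le_div_iff₀ hd]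
      nlinarith
    exact ENNReal.one_le_ofReal.2 h1
  have hεgint : MeasureTheory.Integrable (fun t => ε * g t) ν := hgint.const_mul ε
  have hεgnn : 0 ≤ᵐ[ν] fun t => ε * g t := by
    rw [hν]
    refine (MeasureTheory.ae_restrict_iff' hIcc).2 (MeasureTheory.ae_of_all _ ?_)
    intro t ht
    exact mul_nonneg hε.le (div_nonneg (by norm_num) (hsub t ht).le)
  have hlin : ∫⁻ t, f t ∂ν = ENNReal.ofReal (∫ t, ε * g t ∂ν) :=
    (MeasureTheory.ofReal_integral_eq_lintegral_ofReal hεgint hεgnn).symm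
  calc MeasureTheory.volume S = ν S := hvolS
    _ ≤ ν {t | 1 ≤ f t} := MeasureTheory.measure_mono hSsub2
    _ = 1 * ν {t | 1 ≤ f t} := (one_mul _).symm
    _ ≤ ∫⁻ t, f t ∂ν := MeasureTheory.mul_meas_ge_le_lintegral₀ hfmeas 1
    _ = ENNReal.ofReal (∫ t, ε * g t ∂ν) := hlin
    _ = ENNReal.ofReal (ε * (O 0 - O T)) := by
        rw [MeasureTheory.integral_const_mul, hνint]
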